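/- (Global convergence of SPIDA.) Under the standing assumption with strict inequality αϱγ > 1, suppose L possesses at least one saddle point and both kernels φ (on ℝ^m) and ψ (on ℝ^n) are strongly convex with continuous gradients. Then the SPIDA sequence (x^k, y^k), k = 0, 1, 2, …, started at any (x^0, y^0) ∈ X × Y converges to some saddle point (x^∞, y^∞) of L. -/

import Mathlib

/-!
For a saddle point `(x⋆, y⋆)`, the three-point inequalities of the three Bregman proximal steps,
added to the saddle inequality `L(x⋆, ỹᵏ⁺¹) ≤ L(xᵏ⁺¹, y⋆)`, leave only the cross term
`⟪A (xᵏ⁺¹ - xᵏ), ỹᵏ⁺¹ - yᵏ⁺¹⟫`. Since `ψ` is `ϱ / L`-strongly convex (`L ψ - φ` is convex) and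
`L ‖A‖² ≤ ϱ μ / α < ϱ μ · ϱ γ`, Young's inequality absorbs it into the strong-convexity terms and
gives the Fejér inequality
`Dₖ₊₁ + c (‖xᵏ⁺¹ - xᵏ‖² + ‖ỹᵏ⁺¹ - yᵏ⁺¹‖² + ‖ỹᵏ⁺¹ - yᵏ‖²) ≤ Dₖ`
with `Dₖ = μ B_ψ(x⋆, xᵏ) + γ B_φ(y⋆, yᵏ)`.
So the iterates are bounded and the residuals vanish; by lower semicontinuity every cluster point
is a saddle point, and the Fejér inequality at that cluster point makes `Dₖ` tend to `0` along the
subsequence, hence, being antitone, along the whole sequence.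
-/

noncomputable section
open scoped RealInnerProductSpace
open Filter

abbrev Euc (d : ℕ) : Type := EuclideanSpace ℝ (Fin d)

/-- Bregman distance associated with kernel `φ` whose gradient map is `φ'`. -/
def Breg {d : ℕ} (φ : Euc d → ℝ) (φ' : Euc d → Euc d) (x y : Euc d) : ℝ :=
  φ x - φ y - ⟪φ' y, x - y⟫

/-- The convex-concave Lagrangian `L(x,y) = f(x) + ⟨Ax, y⟩ − g(y)`. -/
def Lag {n m : ℕ} (f : Euc n → ℝ) (g : Euc m → ℝ) (A : Euc n →L[ℝ] Euc m)
    (x : Euc n) (y : Euc m) : ℝ := f x + ⟪A x, y⟫ - g y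

open Set Topology

section FirstOrder

variable {E : Type*} [NormedAddCommGroup E]

theorem ConvexOn.neg_le_sub_of_isMinOn_add [NormedSpace ℝ E] {S : Set E} {H Φ : E → ℝ}
    {Φ' : StrongDual ℝ E} {w z : E} (hH : ConvexOn ℝ S H) (hΦ : HasFDerivAt Φ Φ' w)
    (hmin : IsMinOn (H + Φ) S w) (hw : w ∈ S) (hz : z ∈ S) :
    -Φ' (z - w) ≤ H z - H w := by
  set ℓ : ℝ →ᵃ[ℝ] E := AffineMap.lineMap w z
  have hℓ : ∀ t ∈ Icc (0 : ℝ) 1, ℓ t ∈ S ∧ H (ℓ t) ≤ H w + t * (H z - H w) := by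
    intro t ⟨ht0, ht1⟩
    have hℓt : ℓ t = (1 - t) • w + t • z := AffineMap.lineMap_apply_module w z t
    refine ⟨hℓt ▸ hH.1 hw hz (sub_nonneg.2 ht1) ht0 (by ring), ?_⟩
    have := hH.2 hw hz (sub_nonneg.2 ht1) ht0 (by ring)
    rw [hℓt]
    simp only [smul_eq_mul] at this
    linarith
  set q : ℝ → ℝ := fun t => Φ (ℓ t) + t * (H z - H w)
  have hq : HasDerivAt q (Φ' (z - w) + (H z - H w)) 0 := by
    have hΦℓ : HasDerivAt (Φ ∘ ℓ) (Φ' (z - w)) 0 := by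
      refine HasFDerivAt.comp_hasDerivAt (0 : ℝ) ?_ AffineMap.hasDerivAt_lineMap
      simpa [ℓ] using hΦ
    exact hΦℓ.add ((hasDerivAt_id (0 : ℝ)).mul_const (H z - H w)) |>.congr_deriv (by simp)
  have hqmin : IsMinOn q (Icc 0 1) 0 := by
    intro t ht
    have h : H w + Φ w ≤ H (ℓ t) + Φ (ℓ t) := hmin (hℓ t ht).1
    have h0 : ℓ 0 = w := AffineMap.lineMap_apply_zero w z
    simp only [mem_ofPred_eq, q, h0, zero_mul, add_zero]
    linarith [(hℓ t ht).2]
  have h1 : (1 : ℝ) ∈ posTangentConeAt (Icc 0 1) 0 := by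
    simpa using sub_mem_posTangentConeAt_of_segment_subset (segment_eq_Icc zero_le_one).subset
  have := hqmin.localize.hasFDerivWithinAt_nonneg hq.hasFDerivAt.hasFDerivWithinAt h1
  simp only [map_sub, ContinuousLinearMap.toSpanSingleton_apply, smul_eq_mul, one_mul] at this
  rw [map_sub]
  linarith

theorem ConvexOn.add_inner_le_of_hasGradientAt [InnerProductSpace ℝ E] [CompleteSpace E]
    {S : Set E} {h : E → ℝ} {h' u v : E} (hc : ConvexOn ℝ S h) (hg : HasGradientAt h h' v)
    (hv : v ∈ S) (hu : u ∈ S) :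
    h v + ⟪h', u - v⟫ ≤ h u := by
  -- `v` minimises `h + (-h) = 0`, so the variational inequality is the first-order condition.
  have hmin : IsMinOn (h + -h) S v := fun z _ => by simp
  have := hc.neg_le_sub_of_isMinOn_add (hasGradientAt_iff_hasFDerivAt.1 hg).neg hmin hv hu
  simp only [neg_apply, InnerProductSpace.toDual_apply_apply, neg_neg] at this
  linarith

end FirstOrder

section Bregman

variable {d : ℕ} {φ : Euc d → ℝ} {φ' : Euc d → Euc d}

@[simp]
theorem breg_self (x : Euc d) : Breg φ φ' x x = 0 := by
  simp [Breg]

theorem hasGradientAt_breg_left (hφ : ∀ z, HasGradientAt φ (φ' z) z) (y w : Euc d) :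
    HasGradientAt (fun z => Breg φ φ' z y) (φ' w - φ' y) w := by
  rw [hasGradientAt_iff_hasFDerivAt, map_sub]
  set L := InnerProductSpace.toDual ℝ (Euc d) (φ' y)
  have hlin : HasFDerivAt (fun z => ⟪φ' y, z - y⟫) L w :=
    (L.hasFDerivAt.sub_const ⟪φ' y, y⟫).congr_of_eventuallyEq
      (Eventually.of_forall fun z => by simp [L, inner_sub_right])
  exact ((hasGradientAt_iff_hasFDerivAt.1 (hφ w)).sub_const (φ y)).sub hlin

theorem breg_add_breg_sub_breg (w y z : Euc d) :
    Breg φ φ' w y + Breg φ φ' z w - Breg φ φ' z y = ⟪φ' y - φ' w, z - w⟫ := by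
  simp only [Breg, inner_sub_left, inner_sub_right]
  ring

theorem mul_sq_norm_sub_le_breg {c : ℝ} (hφ : ∀ z, HasGradientAt φ (φ' z) z)
    (hsc : ConvexOn ℝ univ (fun z => φ z - c / 2 * ‖z‖ ^ 2)) (u v : Euc d) :
    c / 2 * ‖u - v‖ ^ 2 ≤ Breg φ φ' u v := by
  have hgrad : HasGradientAt (fun z => φ z - c / 2 * ‖z‖ ^ 2) (φ' v - c • v) v := by
    rw [hasGradientAt_iff_hasFDerivAt, map_sub, map_smul]
    refine (hasGradientAt_iff_hasFDerivAt.1 (hφ v)).sub ?_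
    refine ((hasStrictFDerivAt_norm_sq v).hasFDerivAt.const_mul (c / 2)).congr_fderiv ?_
    ext z
    simp only [smul_apply, innerSL_apply_apply, smul_eq_mul,
      InnerProductSpace.toDual_apply_apply]
    ring
  have := hsc.add_inner_le_of_hasGradientAt hgrad (mem_univ v) (mem_univ u)
  simp only [inner_sub_left, inner_sub_right, real_inner_smul_left, real_inner_self_eq_norm_sq,
    real_inner_comm u v] at this
  rw [Breg, norm_sub_sq_real, inner_sub_right]
  linarith

theorem breg_nonneg {c : ℝ} (hc : 0 ≤ c) (hφ : ∀ z, HasGradientAt φ (φ' z) z)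
    (hsc : ConvexOn ℝ univ (fun z => φ z - c / 2 * ‖z‖ ^ 2)) (u v : Euc d) :
    0 ≤ Breg φ φ' u v :=
  (by positivity : 0 ≤ c / 2 * ‖u - v‖ ^ 2).trans (mul_sq_norm_sub_le_breg hφ hsc u v)

theorem mem_closedBall_of_breg_le {c M : ℝ} {a u : Euc d} (hc : 0 < c)
    (hφ : ∀ z, HasGradientAt φ (φ' z) z)
    (hsc : ConvexOn ℝ univ (fun z => φ z - c / 2 * ‖z‖ ^ 2)) (h : Breg φ φ' a u ≤ M) :
    u ∈ Metric.closedBall a √(2 * M / c) := by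
  have := mul_sq_norm_sub_le_breg hφ hsc a u
  rw [Metric.mem_closedBall, dist_comm, dist_eq_norm]
  exact Real.le_sqrt_of_sq_le ((le_div_iff₀ hc).2 (by linarith))

theorem add_breg_le_of_isMinOn {S : Set (Euc d)} {H : Euc d → ℝ} {γ : ℝ} {y w z : Euc d}
    (hH : ConvexOn ℝ S H) (hφ : ∀ z, HasGradientAt φ (φ' z) z)
    (hmin : IsMinOn (fun z => H z + γ * Breg φ φ' z y) S w) (hw : w ∈ S) (hz : z ∈ S) :
    H w + γ * Breg φ φ' w y + γ * Breg φ φ' z w ≤ H z + γ * Breg φ φ' z y := by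
  have hgrad := (hasGradientAt_iff_hasFDerivAt.1 (hasGradientAt_breg_left hφ y w)).const_mul γ
  have := hH.neg_le_sub_of_isMinOn_add hgrad hmin hw hz
  have hid := breg_add_breg_sub_breg (φ := φ) (φ' := φ') w y z
  simp only [smul_apply, InnerProductSpace.toDual_apply_apply, smul_eq_mul,
    ← neg_sub (φ' y), inner_neg_left, mul_neg, neg_neg] at this
  linear_combination this + γ * hid

theorem Filter.Tendsto.breg {ι : Type*} {l : Filter ι} {u v : ι → Euc d} {a b : Euc d}
    (hφ : ∀ z, HasGradientAt φ (φ' z) z) (hφ' : Continuous φ')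
    (hu : Tendsto u l (𝓝 a)) (hv : Tendsto v l (𝓝 b)) :
    Tendsto (fun i => Breg φ φ' (u i) (v i)) l (𝓝 (Breg φ φ' a b)) := by
  have hφc : Continuous φ :=
    continuous_iff_continuousAt.2 fun z => (hφ z).differentiableAt.continuousAt
  exact ((hφc.tendsto a).comp hu |>.sub ((hφc.tendsto b).comp hv)).sub
    (((hφ'.tendsto b).comp hv).inner (hu.sub hv))

theorem LowerSemicontinuous.le_of_tendsto_three_point {F : Euc d → ℝ} (hF : LowerSemicontinuous F)
    (hφ : ∀ z, HasGradientAt φ (φ' z) z) (hφ' : Continuous φ') {u v : ℕ → Euc d} {r : ℕ → ℝ}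
    {a z : Euc d} {c R : ℝ} (hu : Tendsto u atTop (𝓝 a)) (hv : Tendsto v atTop (𝓝 a))
    (hr : Tendsto r atTop (𝓝 R))
    (hle : ∀ j, F (v j) + c * Breg φ φ' (v j) (u j) + c * Breg φ φ' z (v j) ≤
      r j + c * Breg φ φ' z (u j)) :
    F a ≤ R := by
  have hbound : Tendsto (fun j => r j + c * (Breg φ φ' z (u j) - Breg φ φ' (v j) (u j)
      - Breg φ φ' z (v j))) atTop (𝓝 (R + c * (Breg φ φ' z a - Breg φ φ' a a - Breg φ φ' z a))) :=
    hr.add (((((tendsto_const_nhds.breg hφ hφ' hu).sub (hv.breg hφ hφ' hu)).sub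
      (tendsto_const_nhds.breg hφ hφ' hv))).const_mul c)
  simp only [breg_self, sub_zero, sub_self, mul_zero, add_zero] at hbound
  exact hF.isClosed_epigraph.mem_of_tendsto (hv.prodMk_nhds hbound)
    (Eventually.of_forall fun j => by simp only [mem_ofPred_eq]; linarith [hle j])

end Bregman

theorem tendsto_zero_of_mul_sq_norm_le {ι E : Type*} [SeminormedAddCommGroup E] {l : Filter ι}
    {d : ι → E} {e : ι → ℝ} {c : ℝ} (hc : 0 < c) (h : ∀ i, c * ‖d i‖ ^ 2 ≤ e i)
    (he : Tendsto e l (𝓝 0)) : Tendsto d l (𝓝 0) := by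
  rw [tendsto_zero_iff_norm_tendsto_zero]
  refine squeeze_zero (fun i => norm_nonneg _) (fun i => ?_) (by simpa using (he.div_const c).sqrt)
  exact Real.le_sqrt_of_sq_le ((le_div_iff₀ hc).2 (by linarith [h i]))

theorem tendsto_zero_of_add_le {V r : ℕ → ℝ} (hV : ∀ k, 0 ≤ V k) (hr : ∀ k, 0 ≤ r k)
    (h : ∀ k, V (k + 1) + r k ≤ V k) : Tendsto r atTop (𝓝 0) := by
  have hanti : Antitone V := antitone_nat_of_succ_le fun k => by linarith [h k, hr k]
  have hlim := tendsto_atTop_ciInf hanti ⟨0, by rintro _ ⟨k, rfl⟩; exact hV k⟩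
  have hgap : Tendsto (fun k => V k - V (k + 1)) atTop (𝓝 0) := by
    simpa using hlim.sub (hlim.comp (tendsto_add_atTop_nat 1))
  exact squeeze_zero hr (fun k => by linarith [h k]) hgap

theorem tendsto_of_antitone_of_mul_sq_norm_sub_le {E : Type*} [SeminormedAddCommGroup E]
    {u : ℕ → E} {a : E} {W : ℕ → ℝ} {ns : ℕ → ℕ} {c : ℝ} (hW : Antitone W)
    (hns : Tendsto ns atTop atTop) (hWns : Tendsto (W ∘ ns) atTop (𝓝 0)) (hc : 0 < c)
    (h : ∀ k, c * ‖u k - a‖ ^ 2 ≤ W k) : Tendsto u atTop (𝓝 a) :=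
  tendsto_sub_nhds_zero_iff.1 <|
    tendsto_zero_of_mul_sq_norm_le hc h ((tendsto_iff_tendsto_subseq_of_antitone hW hns).2 hWns)

theorem ContinuousLinearMap.abs_inner_apply_le {E F : Type*} [NormedAddCommGroup E]
    [InnerProductSpace ℝ E] [NormedAddCommGroup F] [InnerProductSpace ℝ F] (A : E →L[ℝ] F)
    {s : ℝ} (hs : 0 < s) (u : E) (v : F) :
    |⟪A u, v⟫| ≤ (‖A‖ ^ 2 * s * ‖u‖ ^ 2 + 1 / s * ‖v‖ ^ 2) / 2 := by
  have hAu : |⟪A u, v⟫| ≤ ‖A‖ * ‖u‖ * ‖v‖ := (abs_real_inner_le_norm _ _).trans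
    (mul_le_mul_of_nonneg_right (A.le_opNorm u) (norm_nonneg v))
  have hrhs : (‖A‖ ^ 2 * s * ‖u‖ ^ 2 + 1 / s * ‖v‖ ^ 2) / 2
      = (s ^ 2 * (‖A‖ * ‖u‖) ^ 2 + ‖v‖ ^ 2) / (2 * s) := by
    field_simp
  rw [hrhs, le_div_iff₀ (by positivity)]
  nlinarith [mul_le_mul_of_nonneg_right hAu (by positivity : (0 : ℝ) ≤ 2 * s),
    sq_nonneg (s * (‖A‖ * ‖u‖) - ‖v‖)]

theorem exists_pos_mul_lt_and_one_div_lt {a b c : ℝ} (ha : 0 ≤ a) (hb : 0 < b) (hc : 0 < c)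
    (h : a < b * c) : ∃ s > 0, a * s < b ∧ 1 / s < c := by
  refine ⟨2 * b / (b * c + a), by positivity, ?_, ?_⟩
  · rw [mul_div_assoc', div_lt_iff₀ (by positivity)]
    nlinarith
  · rw [one_div_div, div_lt_iff₀ (by positivity)]
    linarith

theorem isSaddlePointOn_iff_forall_le {E F β : Type*} [Preorder β] {X : Set E} {Y : Set F}
    {f : E → F → β} {a : E} {b : F} (ha : a ∈ X) (hb : b ∈ Y) :
    IsSaddlePointOn X Y f a b ↔ ∀ x ∈ X, ∀ y ∈ Y, f a y ≤ f a b ∧ f a b ≤ f x b :=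
  ⟨fun h x hx y hy => ⟨h a ha y hy, h x hx b hb⟩,
    fun h x hx y hy => (h x hx y hy).1.trans (h x hx y hy).2⟩

section PairBreg

variable {n m : ℕ} {φ : Euc m → ℝ} {φ' : Euc m → Euc m} {ψ : Euc n → ℝ} {ψ' : Euc n → Euc n}
  {μ γ σ ϱ : ℝ} {x : ℕ → Euc n} {y : ℕ → Euc m}

theorem exists_tendsto_subseq_of_breg_le {p : Euc n} {q : Euc m} {M : ℝ} (hμ : 0 < μ)
    (hγ : 0 < γ) (hσ : 0 < σ) (hϱ : 0 < ϱ) (hψ : ∀ z, HasGradientAt ψ (ψ' z) z)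
    (hφ : ∀ z, HasGradientAt φ (φ' z) z)
    (hψsc : ConvexOn ℝ univ (fun z => ψ z - σ / 2 * ‖z‖ ^ 2))
    (hφsc : ConvexOn ℝ univ (fun z => φ z - ϱ / 2 * ‖z‖ ^ 2))
    (hM : ∀ k, μ * Breg ψ ψ' p (x k) + γ * Breg φ φ' q (y k) ≤ M) :
    ∃ a : Euc n, ∃ b : Euc m, ∃ ns : ℕ → ℕ, StrictMono ns ∧
      Tendsto (x ∘ ns) atTop (𝓝 a) ∧ Tendsto (y ∘ ns) atTop (𝓝 b) := by
  have hball : ∀ k, (x k, y k) ∈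
      Metric.closedBall p √(2 * (M / μ) / σ) ×ˢ Metric.closedBall q √(2 * (M / γ) / ϱ) := by
    intro k
    have hx := mul_nonneg hμ.le (breg_nonneg hσ.le hψ hψsc p (x k))
    have hy := mul_nonneg hγ.le (breg_nonneg hϱ.le hφ hφsc q (y k))
    refine ⟨mem_closedBall_of_breg_le hσ hψ hψsc ?_, mem_closedBall_of_breg_le hϱ hφ hφsc ?_⟩
    · rw [le_div_iff₀ hμ]; linarith [hM k]
    · rw [le_div_iff₀ hγ]; linarith [hM k]
  obtain ⟨⟨a, b⟩, -, ns, hns, hlim⟩ :=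
    ((isCompact_closedBall p _).prod (isCompact_closedBall q _)).tendsto_subseq hball
  exact ⟨a, b, ns, hns, (continuous_fst.tendsto _).comp hlim, (continuous_snd.tendsto _).comp hlim⟩

theorem tendsto_of_antitone_breg {p : Euc n} {q : Euc m} {ns : ℕ → ℕ} (hμ : 0 < μ)
    (hγ : 0 < γ) (hσ : 0 < σ) (hϱ : 0 < ϱ) (hψ : ∀ z, HasGradientAt ψ (ψ' z) z)
    (hψ' : Continuous ψ') (hφ : ∀ z, HasGradientAt φ (φ' z) z) (hφ' : Continuous φ')
    (hψsc : ConvexOn ℝ univ (fun z => ψ z - σ / 2 * ‖z‖ ^ 2))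
    (hφsc : ConvexOn ℝ univ (fun z => φ z - ϱ / 2 * ‖z‖ ^ 2))
    (hW : Antitone fun k => μ * Breg ψ ψ' p (x k) + γ * Breg φ φ' q (y k))
    (hns : Tendsto ns atTop atTop) (hx : Tendsto (x ∘ ns) atTop (𝓝 p))
    (hy : Tendsto (y ∘ ns) atTop (𝓝 q)) :
    Tendsto x atTop (𝓝 p) ∧ Tendsto y atTop (𝓝 q) := by
  have hWns : Tendsto (fun j => μ * Breg ψ ψ' p (x (ns j)) + γ * Breg φ φ' q (y (ns j))) atTop
      (𝓝 0) := by
    simpa using (((tendsto_const_nhds (x := p)).breg hψ hψ' hx).const_mul μ).add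
      (((tendsto_const_nhds (x := q)).breg hφ hφ' hy).const_mul γ)
  have hBx := fun k => mul_nonneg hμ.le (breg_nonneg hσ.le hψ hψsc p (x k))
  have hBy := fun k => mul_nonneg hγ.le (breg_nonneg hϱ.le hφ hφsc q (y k))
  refine ⟨tendsto_of_antitone_of_mul_sq_norm_sub_le hW hns hWns (c := μ * (σ / 2))
    (by positivity) fun k => ?_, tendsto_of_antitone_of_mul_sq_norm_sub_le hW hns hWns
    (c := γ * (ϱ / 2)) (by positivity) fun k => ?_⟩
  · have := mul_le_mul_of_nonneg_left (mul_sq_norm_sub_le_breg hψ hψsc p (x k)) hμ.le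
    rw [norm_sub_rev] at this
    linarith [hBy k]
  · have := mul_le_mul_of_nonneg_left (mul_sq_norm_sub_le_breg hφ hφsc q (y k)) hγ.le
    rw [norm_sub_rev] at this
    linarith [hBx k]

end PairBreg

section SPIDA

variable {n m : ℕ} {X : Set (Euc n)} {Y : Set (Euc m)} {f : Euc n → ℝ} {g : Euc m → ℝ}
  {A : Euc n →L[ℝ] Euc m}

theorem isSaddlePointOn_lag_of_le {xs : Euc n} {ys : Euc m}
    (hx : ∀ z ∈ X, f xs + ⟪A xs, ys⟫ ≤ f z + ⟪A z, ys⟫)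
    (hy : ∀ z ∈ Y, g ys + ⟪A xs, z⟫ ≤ g z + ⟪A xs, ys⟫) :
    IsSaddlePointOn X Y (Lag f g A) xs ys := fun xx hxx yy hyy => by
  simp only [Lag]
  linarith [hx xx hxx, hy yy hyy]

/-- One SPIDA iteration `(x₀, y₀) ↦ (x₁, y₁)`, with `yt` the dual prediction `ỹ`. -/
structure IsSPIDAStep (X : Set (Euc n)) (Y : Set (Euc m)) (f : Euc n → ℝ) (g : Euc m → ℝ)
    (A : Euc n →L[ℝ] Euc m) (γ μ : ℝ) (φ : Euc m → ℝ) (φ' : Euc m → Euc m) (ψ : Euc n → ℝ)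
    (ψ' : Euc n → Euc n) (x₀ : Euc n) (y₀ yt : Euc m) (x₁ : Euc n) (y₁ : Euc m) : Prop where
  pred_mem : yt ∈ Y
  pred_max : IsMaxOn (fun z => -g z + ⟪A x₀, z⟫ - γ * Breg φ φ' z y₀) Y yt
  primal_mem : x₁ ∈ X
  primal_min : IsMinOn (fun z => f z + ⟪A z, yt⟫ + μ * Breg ψ ψ' z x₀) X x₁
  dual_mem : y₁ ∈ Y
  dual_max : IsMaxOn (fun z => -g z + ⟪A x₁, z⟫ - γ * Breg φ φ' z y₀) Y y₁

variable {γ μ : ℝ} {φ : Euc m → ℝ} {φ' : Euc m → Euc m} {ψ : Euc n → ℝ} {ψ' : Euc n → Euc n}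

theorem primal_three_point (hXcv : Convex ℝ X) (hf : ConvexOn ℝ univ f)
    (hψ : ∀ z, HasGradientAt ψ (ψ' z) z) {x₀ x₁ z : Euc n} {v : Euc m}
    (hmin : IsMinOn (fun z => f z + ⟪A z, v⟫ + μ * Breg ψ ψ' z x₀) X x₁) (hx₁ : x₁ ∈ X)
    (hz : z ∈ X) :
    f x₁ + ⟪A x₁, v⟫ + μ * Breg ψ ψ' x₁ x₀ + μ * Breg ψ ψ' z x₁ ≤
      f z + ⟪A z, v⟫ + μ * Breg ψ ψ' z x₀ := by
  have hlin : ConvexOn ℝ univ (fun z => ⟪A z, v⟫) :=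
    (((innerₗ _ v).comp A.toLinearMap).convexOn convex_univ).congr fun z _ =>
      real_inner_comm (A z) v
  exact add_breg_le_of_isMinOn ((hf.add hlin).subset (subset_univ X) hXcv) hψ hmin hx₁ hz

theorem dual_three_point (hYcv : Convex ℝ Y) (hg : ConvexOn ℝ univ g)
    (hφ : ∀ z, HasGradientAt φ (φ' z) z) {y₀ y₁ z : Euc m} {u : Euc m}
    (hmax : IsMaxOn (fun z => -g z + ⟪u, z⟫ - γ * Breg φ φ' z y₀) Y y₁) (hy₁ : y₁ ∈ Y)
    (hz : z ∈ Y) :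
    g y₁ - ⟪u, y₁⟫ + γ * Breg φ φ' y₁ y₀ + γ * Breg φ φ' z y₁ ≤
      g z - ⟪u, z⟫ + γ * Breg φ φ' z y₀ := by
  have hlin : ConcaveOn ℝ univ (fun z => ⟪u, z⟫) := (innerₗ _ u).concaveOn convex_univ
  refine add_breg_le_of_isMinOn ((hg.sub hlin).subset (subset_univ Y) hYcv) hφ
    (fun z hz => ?_) hy₁ hz
  have := hmax hz
  simp only [mem_ofPred_eq, Pi.sub_apply] at this ⊢
  linarith

theorem IsSPIDAStep.descent {x₀ x₁ xs : Euc n} {y₀ yt y₁ ys : Euc m} {σ ϱ s : ℝ}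
    (hstep : IsSPIDAStep X Y f g A γ μ φ φ' ψ ψ' x₀ y₀ yt x₁ y₁) (hxs : xs ∈ X) (hys : ys ∈ Y)
    (hsad : IsSaddlePointOn X Y (Lag f g A) xs ys) (hXcv : Convex ℝ X) (hYcv : Convex ℝ Y)
    (hf : ConvexOn ℝ univ f) (hg : ConvexOn ℝ univ g) (hμ : 0 ≤ μ) (hγ : 0 ≤ γ)
    (hφ : ∀ z, HasGradientAt φ (φ' z) z) (hψ : ∀ z, HasGradientAt ψ (ψ' z) z)
    (hφsc : ConvexOn ℝ univ (fun z => φ z - ϱ / 2 * ‖z‖ ^ 2))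
    (hψsc : ConvexOn ℝ univ (fun z => ψ z - σ / 2 * ‖z‖ ^ 2)) (hs : 0 < s) :
    μ * Breg ψ ψ' xs x₁ + γ * Breg φ φ' ys y₁ + (μ * σ - ‖A‖ ^ 2 * s) / 2 * ‖x₁ - x₀‖ ^ 2 +
        (γ * ϱ - 1 / s) / 2 * ‖yt - y₁‖ ^ 2 + γ * Breg φ φ' yt y₀ ≤
      μ * Breg ψ ψ' xs x₀ + γ * Breg φ φ' ys y₀ := by
  have hprimal := primal_three_point hXcv hf hψ hstep.primal_min hstep.primal_mem hxs
  have hdual := dual_three_point hYcv hg hφ hstep.dual_max hstep.dual_mem hys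
  have hpred := dual_three_point hYcv hg hφ hstep.pred_max hstep.pred_mem hstep.dual_mem
  have hgap : Lag f g A xs yt ≤ Lag f g A x₁ ys := hsad x₁ hstep.primal_mem yt hstep.pred_mem
  have hcross := (neg_le_neg (A.abs_inner_apply_le hs (x₁ - x₀) (yt - y₁))).trans
    (neg_abs_le _)
  simp only [map_sub, inner_sub_left, inner_sub_right] at hcross
  have hx := mul_le_mul_of_nonneg_left (mul_sq_norm_sub_le_breg hψ hψsc x₁ x₀) hμ
  have hy := mul_le_mul_of_nonneg_left (mul_sq_norm_sub_le_breg hφ hφsc y₁ yt) hγ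
  rw [norm_sub_rev] at hy
  simp only [Lag] at hgap
  linarith

variable {x : ℕ → Euc n} {yt y : ℕ → Euc m}

theorem spida_clusterPt_isSaddlePointOn {ns : ℕ → ℕ} {p : Euc n} {q : Euc m}
    (hXcl : IsClosed X) (hXcv : Convex ℝ X) (hYcl : IsClosed Y) (hYcv : Convex ℝ Y)
    (hf : ConvexOn ℝ univ f) (hflsc : LowerSemicontinuous f) (hg : ConvexOn ℝ univ g)
    (hglsc : LowerSemicontinuous g) (hφ : ∀ z, HasGradientAt φ (φ' z) z) (hφ' : Continuous φ')
    (hψ : ∀ z, HasGradientAt ψ (ψ' z) z) (hψ' : Continuous ψ')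
    (hstep : ∀ k, IsSPIDAStep X Y f g A γ μ φ φ' ψ ψ' (x k) (y k) (yt (k + 1)) (x (k + 1))
      (y (k + 1)))
    (hdx : Tendsto (fun k => x (k + 1) - x k) atTop (𝓝 0))
    (hdy : Tendsto (fun k => y (k + 1) - y k) atTop (𝓝 0))
    (hdyt : Tendsto (fun k => yt (k + 1) - y (k + 1)) atTop (𝓝 0))
    (hns : Tendsto ns atTop atTop) (hx : Tendsto (x ∘ ns) atTop (𝓝 p))
    (hy : Tendsto (y ∘ ns) atTop (𝓝 q)) :
    p ∈ X ∧ q ∈ Y ∧ IsSaddlePointOn X Y (Lag f g A) p q := by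
  have hx₁ : Tendsto (fun j => x (ns j + 1)) atTop (𝓝 p) := by
    simpa using hx.add (hdx.comp hns)
  have hy₁ : Tendsto (fun j => y (ns j + 1)) atTop (𝓝 q) := by
    simpa using hy.add (hdy.comp hns)
  have hyt₁ : Tendsto (fun j => yt (ns j + 1)) atTop (𝓝 q) := by
    simpa using hy₁.add (hdyt.comp hns)
  have hAx₁ : Tendsto (fun j => A (x (ns j + 1))) atTop (𝓝 (A p)) :=
    (A.continuous.tendsto p).comp hx₁
  refine ⟨hXcl.mem_of_tendsto hx₁ (Eventually.of_forall fun j => (hstep (ns j)).primal_mem),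
    hYcl.mem_of_tendsto hy₁ (Eventually.of_forall fun j => (hstep (ns j)).dual_mem),
    isSaddlePointOn_lag_of_le (fun z hz => ?_) (fun z hz => ?_)⟩
  · have := hflsc.le_of_tendsto_three_point hψ hψ' (z := z) (c := μ) hx hx₁
      (((tendsto_const_nhds.inner hyt₁).sub (hAx₁.inner hyt₁)).const_add (f z))
      fun j => by
        have := primal_three_point hXcv hf hψ (hstep (ns j)).primal_min (hstep (ns j)).primal_mem hz
        simp only [Function.comp_apply]
        linarith
    linarith
  · have := hglsc.le_of_tendsto_three_point hφ hφ' (z := z) (c := γ) hy hy₁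
      (((hAx₁.inner tendsto_const_nhds).const_sub (g z)).add (hAx₁.inner hy₁))
      fun j => by
        have := dual_three_point hYcv hg hφ (hstep (ns j)).dual_max (hstep (ns j)).dual_mem hz
        simp only [Function.comp_apply]
        linarith
    linarith

theorem spida_fejer {σ ϱ : ℝ} (hXcv : Convex ℝ X) (hYcv : Convex ℝ Y) (hf : ConvexOn ℝ univ f)
    (hg : ConvexOn ℝ univ g) (hμ : 0 < μ) (hγ : 0 < γ) (hσ : 0 < σ) (hϱ : 0 < ϱ)
    (hφ : ∀ z, HasGradientAt φ (φ' z) z) (hψ : ∀ z, HasGradientAt ψ (ψ' z) z)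
    (hφsc : ConvexOn ℝ univ (fun z => φ z - ϱ / 2 * ‖z‖ ^ 2))
    (hψsc : ConvexOn ℝ univ (fun z => ψ z - σ / 2 * ‖z‖ ^ 2))
    (hA : ‖A‖ ^ 2 < μ * σ * (γ * ϱ))
    (hstep : ∀ k, IsSPIDAStep X Y f g A γ μ φ φ' ψ ψ' (x k) (y k) (yt (k + 1)) (x (k + 1))
      (y (k + 1))) :
    ∃ c > 0, ∀ xs ∈ X, ∀ ys ∈ Y, IsSaddlePointOn X Y (Lag f g A) xs ys → ∀ k,
      μ * Breg ψ ψ' xs (x (k + 1)) + γ * Breg φ φ' ys (y (k + 1)) +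
          c * (‖x (k + 1) - x k‖ ^ 2 + ‖yt (k + 1) - y (k + 1)‖ ^ 2 + ‖yt (k + 1) - y k‖ ^ 2) ≤
        μ * Breg ψ ψ' xs (x k) + γ * Breg φ φ' ys (y k) := by
  obtain ⟨s, hs, hsx, hsy⟩ :=
    exists_pos_mul_lt_and_one_div_lt (sq_nonneg ‖A‖) (by positivity) (by positivity) hA
  set c₁ := (μ * σ - ‖A‖ ^ 2 * s) / 2 with hc₁
  set c₂ := (γ * ϱ - 1 / s) / 2 with hc₂
  refine ⟨min c₁ c₂, lt_min (by linarith) (by linarith), fun xs hxs ys hys hsad k => ?_⟩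
  have hdesc := (hstep k).descent hxs hys hsad hXcv hYcv hf hg hμ.le hγ.le hφ hψ hφsc hψsc hs
  rw [← hc₁, ← hc₂] at hdesc
  have hpred := mul_le_mul_of_nonneg_left
    (mul_sq_norm_sub_le_breg hφ hφsc (yt (k + 1)) (y k)) hγ.le
  have h₁ := mul_le_mul_of_nonneg_right (min_le_left c₁ c₂) (sq_nonneg ‖x (k + 1) - x k‖)
  have h₂ := mul_le_mul_of_nonneg_right (min_le_right c₁ c₂) (sq_nonneg ‖yt (k + 1) - y (k + 1)‖)
  have h₃ := mul_le_mul_of_nonneg_right ((min_le_right c₁ c₂).trans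
    (show c₂ ≤ γ * (ϱ / 2) by linarith [one_div_pos.2 hs])) (sq_nonneg ‖yt (k + 1) - y k‖)
  linarith

theorem spida_tendsto_isSaddlePointOn {σ ϱ : ℝ} {xs : Euc n} {ys : Euc m}
    (hXcl : IsClosed X) (hXcv : Convex ℝ X) (hYcl : IsClosed Y) (hYcv : Convex ℝ Y)
    (hf : ConvexOn ℝ univ f) (hflsc : LowerSemicontinuous f) (hg : ConvexOn ℝ univ g)
    (hglsc : LowerSemicontinuous g) (hμ : 0 < μ) (hγ : 0 < γ) (hσ : 0 < σ) (hϱ : 0 < ϱ)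
    (hφ : ∀ z, HasGradientAt φ (φ' z) z) (hφ' : Continuous φ')
    (hψ : ∀ z, HasGradientAt ψ (ψ' z) z) (hψ' : Continuous ψ')
    (hφsc : ConvexOn ℝ univ (fun z => φ z - ϱ / 2 * ‖z‖ ^ 2))
    (hψsc : ConvexOn ℝ univ (fun z => ψ z - σ / 2 * ‖z‖ ^ 2))
    (hA : ‖A‖ ^ 2 < μ * σ * (γ * ϱ))
    (hstep : ∀ k, IsSPIDAStep X Y f g A γ μ φ φ' ψ ψ' (x k) (y k) (yt (k + 1)) (x (k + 1))
      (y (k + 1)))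
    (hxs : xs ∈ X) (hys : ys ∈ Y) (hsad : IsSaddlePointOn X Y (Lag f g A) xs ys) :
    ∃ p q, (p ∈ X ∧ q ∈ Y ∧ IsSaddlePointOn X Y (Lag f g A) p q) ∧
      Tendsto x atTop (𝓝 p) ∧ Tendsto y atTop (𝓝 q) := by
  obtain ⟨c, hc, hfejer⟩ := spida_fejer hXcv hYcv hf hg hμ hγ hσ hϱ hφ hψ hφsc hψsc hA hstep
  have hlyap_antitone : ∀ {p q}, p ∈ X → q ∈ Y → IsSaddlePointOn X Y (Lag f g A) p q →
      Antitone fun k => μ * Breg ψ ψ' p (x k) + γ * Breg φ φ' q (y k) :=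
    fun hp hq hpq => antitone_nat_of_succ_le fun k => by
      nlinarith [hfejer _ hp _ hq hpq k, sq_nonneg ‖x (k + 1) - x k‖,
        sq_nonneg ‖yt (k + 1) - y (k + 1)‖, sq_nonneg ‖yt (k + 1) - y k‖]
  have hres := tendsto_zero_of_add_le
    (fun k => add_nonneg (mul_nonneg hμ.le (breg_nonneg hσ.le hψ hψsc xs (x k)))
      (mul_nonneg hγ.le (breg_nonneg hϱ.le hφ hφsc ys (y k))))
    (fun k => by positivity) (hfejer xs hxs ys hys hsad)
  have hdx : Tendsto (fun k => x (k + 1) - x k) atTop (𝓝 0) :=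
    tendsto_zero_of_mul_sq_norm_le hc (fun k => by
      nlinarith [sq_nonneg ‖yt (k + 1) - y (k + 1)‖, sq_nonneg ‖yt (k + 1) - y k‖]) hres
  have hdyt : Tendsto (fun k => yt (k + 1) - y (k + 1)) atTop (𝓝 0) :=
    tendsto_zero_of_mul_sq_norm_le hc (fun k => by
      nlinarith [sq_nonneg ‖x (k + 1) - x k‖, sq_nonneg ‖yt (k + 1) - y k‖]) hres
  have hdpred : Tendsto (fun k => yt (k + 1) - y k) atTop (𝓝 0) :=
    tendsto_zero_of_mul_sq_norm_le hc (fun k => by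
      nlinarith [sq_nonneg ‖x (k + 1) - x k‖, sq_nonneg ‖yt (k + 1) - y (k + 1)‖]) hres
  have hdy : Tendsto (fun k => y (k + 1) - y k) atTop (𝓝 0) := by
    simpa using hdpred.sub hdyt
  obtain ⟨p, q, ns, hns, hx, hy⟩ := exists_tendsto_subseq_of_breg_le hμ hγ hσ hϱ hψ hφ hψsc hφsc
    fun k => hlyap_antitone hxs hys hsad (Nat.zero_le k)
  obtain ⟨hp, hq, hpq⟩ := spida_clusterPt_isSaddlePointOn hXcl hXcv hYcl hYcv hf hflsc hg hglsc
    hφ hφ' hψ hψ' hstep hdx hdy hdyt hns.tendsto_atTop hx hy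
  exact ⟨p, q, ⟨hp, hq, hpq⟩, tendsto_of_antitone_breg hμ hγ hσ hϱ hψ hψ' hφ hφ' hψsc hφsc
    (hlyap_antitone hp hq hpq) hns.tendsto_atTop hx hy⟩

end SPIDA

theorem spida_global_convergence_general {n m : ℕ}
    (X : Set (Euc n)) (Y : Set (Euc m))
    (hXcl : IsClosed X) (hXcv : Convex ℝ X)
    (hYcl : IsClosed Y) (hYcv : Convex ℝ Y)
    (f : Euc n → ℝ) (g : Euc m → ℝ)
    (hf : ConvexOn ℝ Set.univ f) (hflsc : LowerSemicontinuous f)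
    (hg : ConvexOn ℝ Set.univ g) (hglsc : LowerSemicontinuous g)
    (A : Euc n →L[ℝ] Euc m)
    (γ μ : ℝ) (hγ : 0 < γ) (hμ : 0 < μ)
    (φ : Euc m → ℝ) (φ' : Euc m → Euc m)
    (hφg : ∀ z, HasGradientAt φ (φ' z) z)
    (ψ : Euc n → ℝ) (ψ' : Euc n → Euc n)
    (hψg : ∀ z, HasGradientAt ψ (ψ' z) z)
    (x : ℕ → Euc n) (yt y : ℕ → Euc m)
    (hytmem : ∀ k, yt (k + 1) ∈ Y)
    (hytmax : ∀ k, ∀ z ∈ Y, -g z + ⟪A (x k), z⟫ - γ * Breg φ φ' z (y k) ≤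
      -g (yt (k + 1)) + ⟪A (x k), yt (k + 1)⟫ - γ * Breg φ φ' (yt (k + 1)) (y k))
    (hxmem : ∀ k, x (k + 1) ∈ X)
    (hxmin : ∀ k, ∀ z ∈ X,
      f (x (k + 1)) + ⟪A (x (k + 1)), yt (k + 1)⟫ + μ * Breg ψ ψ' (x (k + 1)) (x k) ≤
        f z + ⟪A z, yt (k + 1)⟫ + μ * Breg ψ ψ' z (x k))
    (hymem : ∀ k, y (k + 1) ∈ Y)
    (hymax : ∀ k, ∀ z ∈ Y, -g z + ⟪A (x (k + 1)), z⟫ - γ * Breg φ φ' z (y k) ≤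
      -g (y (k + 1)) + ⟪A (x (k + 1)), y (k + 1)⟫ - γ * Breg φ φ' (y (k + 1)) (y k))
    (ϱ α : ℝ) (hϱ : 0 < ϱ) (hα : 0 < α)
    (hφsc : ConvexOn ℝ Set.univ (fun z => φ z - ϱ / 2 * ‖z‖ ^ 2))
    (φn : Euc n → ℝ)
    (hφnsc : ConvexOn ℝ Set.univ (fun z => φn z - ϱ / 2 * ‖z‖ ^ 2))
    (L0 : ℝ) (hL0pos : 0 < L0)
    (hL0le : L0 ≤ ϱ * μ / (α * ‖(ContinuousLinearMap.adjoint A).comp A‖))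
    (hLψφ : ConvexOn ℝ Set.univ (fun z => L0 * ψ z - φn z))
    (hstrict : 1 < α * ϱ * γ)
    (hsaddle_exists : ∃ xs ∈ X, ∃ ys ∈ Y, ∀ xx ∈ X, ∀ yy ∈ Y,
      Lag f g A xs yy ≤ Lag f g A xs ys ∧ Lag f g A xs ys ≤ Lag f g A xx ys)
    (hφ'cont : Continuous φ') (hψ'cont : Continuous ψ') :
    ∃ xl : Euc n, ∃ yl : Euc m,
      (xl ∈ X ∧ yl ∈ Y ∧ ∀ xx ∈ X, ∀ yy ∈ Y,
        Lag f g A xl yy ≤ Lag f g A xl yl ∧ Lag f g A xl yl ≤ Lag f g A xx yl) ∧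
      Tendsto x atTop (nhds xl) ∧ Tendsto y atTop (nhds yl) := by
  have hψsc : ConvexOn ℝ univ (fun z => ψ z - ϱ / L0 / 2 * ‖z‖ ^ 2) :=
    ((hLψφ.add hφnsc).smul (inv_nonneg.2 hL0pos.le)).congr fun z _ => by
      simp only [Pi.add_apply, smul_eq_mul]
      field_simp
      ring
  have hA : ‖A‖ ^ 2 < μ * (ϱ / L0) * (γ * ϱ) := by
    rw [ContinuousLinearMap.norm_adjoint_comp_self] at hL0le
    rw [show μ * (ϱ / L0) * (γ * ϱ) = μ * ϱ * (γ * ϱ) / L0 by ring, lt_div_iff₀ hL0pos]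
    rcases (norm_nonneg A).eq_or_lt with hA0 | hApos
    · rw [← hA0, zero_pow two_ne_zero, zero_mul]
      positivity
    · rw [le_div_iff₀ (by positivity)] at hL0le
      nlinarith [mul_pos (mul_pos hL0pos (pow_pos hApos 2)) (sub_pos.2 hstrict)]
  obtain ⟨xs, hxs, ys, hys, hsad⟩ := hsaddle_exists
  obtain ⟨p, q, ⟨hp, hq, hpq⟩, hx, hy⟩ := spida_tendsto_isSaddlePointOn hXcl hXcv hYcl hYcv
    hf hflsc hg hglsc hμ hγ (div_pos hϱ hL0pos) hϱ hφg hφ'cont hψg hψ'cont hφsc hψsc hA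
    (fun k => ⟨hytmem k, hytmax k, hxmem k, hxmin k, hymem k, hymax k⟩) hxs hys
    ((isSaddlePointOn_iff_forall_le hxs hys).2 hsad)
  exact ⟨p, q, ⟨hp, hq, (isSaddlePointOn_iff_forall_le hp hq).1 hpq⟩, hx, hy⟩

/-- global convergence of SPIDA to a saddle point. -/
theorem spida_global_convergence {n m : ℕ}
    (X : Set (Euc n)) (Y : Set (Euc m))
    (hXne : X.Nonempty) (hXcl : IsClosed X) (hXcv : Convex ℝ X)
    (hYne : Y.Nonempty) (hYcl : IsClosed Y) (hYcv : Convex ℝ Y)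
    (f : Euc n → ℝ) (g : Euc m → ℝ)
    (hf : ConvexOn ℝ Set.univ f) (hflsc : LowerSemicontinuous f)
    (hg : ConvexOn ℝ Set.univ g) (hglsc : LowerSemicontinuous g)
    (A : Euc n →L[ℝ] Euc m)
    (γ μ : ℝ) (hγ : 0 < γ) (hμ : 0 < μ)
    (φ : Euc m → ℝ) (φ' : Euc m → Euc m)
    (hφg : ∀ z, HasGradientAt φ (φ' z) z) (hφcv : ConvexOn ℝ Set.univ φ)
    (ψ : Euc n → ℝ) (ψ' : Euc n → Euc n)
    (hψg : ∀ z, HasGradientAt ψ (ψ' z) z) (hψcv : ConvexOn ℝ Set.univ ψ)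
    (x : ℕ → Euc n) (yt y : ℕ → Euc m)
    (hx0 : x 0 ∈ X) (hy0 : y 0 ∈ Y)
    (hytmem : ∀ k, yt (k + 1) ∈ Y)
    (hytmax : ∀ k, ∀ z ∈ Y, -g z + ⟪A (x k), z⟫ - γ * Breg φ φ' z (y k) ≤
      -g (yt (k + 1)) + ⟪A (x k), yt (k + 1)⟫ - γ * Breg φ φ' (yt (k + 1)) (y k))
    (hxmem : ∀ k, x (k + 1) ∈ X)
    (hxmin : ∀ k, ∀ z ∈ X,
      f (x (k + 1)) + ⟪A (x (k + 1)), yt (k + 1)⟫ + μ * Breg ψ ψ' (x (k + 1)) (x k) ≤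
        f z + ⟪A z, yt (k + 1)⟫ + μ * Breg ψ ψ' z (x k))
    (hymem : ∀ k, y (k + 1) ∈ Y)
    (hymax : ∀ k, ∀ z ∈ Y, -g z + ⟪A (x (k + 1)), z⟫ - γ * Breg φ φ' z (y k) ≤
      -g (y (k + 1)) + ⟪A (x (k + 1)), y (k + 1)⟫ - γ * Breg φ φ' (y (k + 1)) (y k))
    (ϱ α : ℝ) (hϱ : 0 < ϱ) (hα : 0 < α)
    (hφsc : ConvexOn ℝ Set.univ (fun z => φ z - ϱ / 2 * ‖z‖ ^ 2))
    (hαϱγ : 1 ≤ α * ϱ * γ)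
    (φn : Euc n → ℝ) (φn' : Euc n → Euc n)
    (hφng : ∀ z, HasGradientAt φn (φn' z) z)
    (hφnsc : ConvexOn ℝ Set.univ (fun z => φn z - ϱ / 2 * ‖z‖ ^ 2))
    (L0 : ℝ) (hL0pos : 0 < L0)
    (hL0le : L0 ≤ ϱ * μ / (α * ‖(ContinuousLinearMap.adjoint A).comp A‖))
    (hLψφ : ConvexOn ℝ Set.univ (fun z => L0 * ψ z - φn z))
    (hstrict : 1 < α * ϱ * γ)
    (hsaddle_exists : ∃ xs ∈ X, ∃ ys ∈ Y, ∀ xx ∈ X, ∀ yy ∈ Y,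
      Lag f g A xs yy ≤ Lag f g A xs ys ∧ Lag f g A xs ys ≤ Lag f g A xx ys)
    (ς : ℝ) (hς : 0 < ς)
    (hψsc : ConvexOn ℝ Set.univ (fun z => ψ z - ς / 2 * ‖z‖ ^ 2))
    (hφ'cont : Continuous φ') (hψ'cont : Continuous ψ') :
    ∃ xl : Euc n, ∃ yl : Euc m,
      (xl ∈ X ∧ yl ∈ Y ∧ ∀ xx ∈ X, ∀ yy ∈ Y,
        Lag f g A xl yy ≤ Lag f g A xl yl ∧ Lag f g A xl yl ≤ Lag f g A xx yl) ∧
      Tendsto x atTop (nhds xl) ∧ Tendsto y atTop (nhds yl) :=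
  spida_global_convergence_general X Y hXcl hXcv hYcl hYcv f g hf hflsc hg hglsc A γ μ hγ hμ φ φ'
    hφg ψ ψ' hψg x yt y hytmem hytmax hxmem hxmin hymem hymax ϱ α hϱ hα hφsc φn hφnsc L0 hL0pos
    hL0le hLψφ hstrict hsaddle_exists hφ'cont hψ'cont
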